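/- arXiv:1008.2295 — 6 statements merged into one kernel-verified Lean document; each statement's English description precedes it below -/
import Mathlib

section
/- Let m be a positive integer, let α₁, α₂ be positive irrational real numbers with 1/α₁ + 1/α₂ = m, and let β₁, β₂ be any real numbers. Then the family {S(α₁,β₁), S(α₂,β₂)} is an m-EEC if and only if β₁/α₁ + β₂/α₂ is an integer. -/
/-- The number of positive integers `n` with `⌊n·α + β⌋ = N`, i.e. the multiplicity
of `N` in the Beatty sequence `S(α,β)`. -/
noncomputable def beattyCount (α β : ℝ) (N : ℤ) : ℕ :=
  Nat.card {n : ℕ // 0 < n ∧ ⌊(n : ℝ) * α + β⌋ = N}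

/-!
Counting the `n ≥ 1` with `N ≤ nα + β < N + 1` gives `r_{α,β}(N) = ⌈(N+1-β)/α⌉ - ⌈(N-β)/α⌉` once
`N > β`, so the sum of the two counts telescopes. With `x = (N-β₁)/α₁` and `s = β₁/α₁ + β₂/α₂`, the
relation `1/α₁ + 1/α₂ = m` gives `(N-β₂)/α₂ = mN - s - x`, so the pair is an `m`-EEC iff
`⌈x⌉ + ⌈-s-x⌉` is eventually constant in `N`. If `s ∈ ℤ` it equals `1 - s` whenever `x ∉ ℤ`, which
fails for at most one `N`. If `s ∉ ℤ` it equals `⌊-s⌋ + 2` or `⌊-s⌋ + 1` according as the fractional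
part of `x` lies below or above that of `-s`, and both occur for arbitrarily large `N` because the
multiples of the irrational `1/α₁` are dense modulo `1`.
-/

open Filter Set Topology

namespace Int

variable {x t : ℝ}

theorem ceil_add_ceil_intCast_sub (hx : ∀ k : ℤ, x ≠ k) (z : ℤ) : ⌈x⌉ + ⌈(z : ℝ) - x⌉ = z + 1 := by
  have hfloor : ⌊x⌋ < x := (floor_le x).lt_of_ne fun h => hx _ h.symm
  have hceil : ⌈x⌉ = ⌊x⌋ + 1 := le_antisymm (ceil_le_floor_add_one x) (lt_ceil.2 hfloor)
  rw [sub_eq_neg_add, ceil_add_intCast, ceil_neg, hceil]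
  ring

theorem ceil_add_ceil_sub_of_sub_lt_fract {k : ℤ} (h0 : 0 < x - k) (h1 : x - k < fract t) :
    ⌈x⌉ + ⌈t - x⌉ = ⌊t⌋ + 2 := by
  have hx : ⌈x⌉ = k + 1 :=
    ceil_eq_iff.2 ⟨by push_cast; linarith, by push_cast; linarith [fract_lt_one t]⟩
  have ht : ⌈t - x⌉ = ⌊t⌋ - k + 1 := by
    rw [fract] at h1
    rw [ceil_eq_iff]
    push_cast
    constructor <;> linarith [floor_le t, lt_floor_add_one t]
  omega

theorem ceil_add_ceil_sub_of_fract_lt_sub {k : ℤ} (h0 : fract t < x - k) (h1 : x - k < 1) :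
    ⌈x⌉ + ⌈t - x⌉ = ⌊t⌋ + 1 := by
  have hx : ⌈x⌉ = k + 1 :=
    ceil_eq_iff.2 ⟨by push_cast; linarith [fract_nonneg t], by push_cast; linarith⟩
  have ht : ⌈t - x⌉ = ⌊t⌋ - k := by
    rw [fract] at h0
    rw [ceil_eq_iff]
    push_cast
    constructor <;> linarith [floor_le t, lt_floor_add_one t]
  omega

end Int

theorem Irrational.frequently_exists_mul_sub_intCast_mem_Ioo {γ : ℝ} (hγ : Irrational γ)
    {a b : ℝ} (hab : a < b) : ∃ᶠ N : ℤ in atTop, ∃ k : ℤ, N * γ - k ∈ Ioo a b := by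
  have hdense : DenseRange (· • (γ : AddCircle (1 : ℝ)) : ℤ → AddCircle (1 : ℝ)) :=
    AddCircle.denseRange_zsmul_coe_iff.2 (by rwa [div_one])
  -- in a compact group every point of the closure of the `ℤ`-multiples is a limit of `ℕ`-multiples
  have hcluster : MapClusterPt (((a + b) / 2 : ℝ) : AddCircle (1 : ℝ)) atTop
      (· • (γ : AddCircle (1 : ℝ)) : ℤ → AddCircle (1 : ℝ)) :=
    ((mapClusterPt_atTop_nsmul_tfae _ _).out 1 3).2 (hdense _)
  have hU : ((↑) : ℝ → AddCircle (1 : ℝ)) '' Ioo a b ∈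
      𝓝 (((a + b) / 2 : ℝ) : AddCircle (1 : ℝ)) :=
    QuotientAddGroup.isOpenMap_coe.image_mem_nhds (Ioo_mem_nhds (by linarith) (by linarith))
  refine (hcluster.frequently hU).mono fun N ⟨y, hy, hyN⟩ => ?_
  have hzero : ((N * γ - y : ℝ) : AddCircle (1 : ℝ)) = 0 := by
    rw [AddCircle.coe_sub, hyN]
    simp
  obtain ⟨k, hk⟩ := (AddCircle.coe_eq_zero_iff 1).1 hzero
  refine ⟨k, ?_⟩
  rwa [show (N : ℝ) * γ - k = y by rw [zsmul_one] at hk; rw [hk]; ring]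

theorem Irrational.eventually_sub_div_ne_intCast {α : ℝ} (hα : Irrational α) (β : ℝ) :
    ∀ᶠ N : ℤ in atTop, ∀ k : ℤ, (N - β) / α ≠ k := by
  by_cases h : ∃ N₀ k₀ : ℤ, (N₀ - β) / α = k₀
  · obtain ⟨N₀, k₀, h₀⟩ := h
    filter_upwards [eventually_gt_atTop N₀] with N hN k hk
    have hα0 : α ≠ 0 := hα.ne_zero
    have hdiff : ((N - N₀ : ℤ) : ℝ) = (k - k₀ : ℤ) * α := by
      push_cast; field_simp at hk h₀; linarith
    have hk₀ : k - k₀ ≠ 0 := by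
      rintro hkk
      rw [hkk, Int.cast_zero, zero_mul, Int.cast_eq_zero] at hdiff
      omega
    exact (hα.intCast_mul hk₀).ne_int _ hdiff.symm
  · push Not at h
    exact Eventually.of_forall fun N => h N

theorem exists_eventually_eq_of_eventually_add_one_eq {α : Type*} {f : ℤ → α}
    (h : ∀ᶠ N in atTop, f (N + 1) = f N) : ∃ c, ∀ᶠ N in atTop, f N = c := by
  obtain ⟨N₀, hN₀⟩ := eventually_atTop.1 h
  refine ⟨f N₀, eventually_atTop.2 ⟨N₀, Int.leInduction rfl fun N hN ih => ?_⟩⟩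
  rw [hN₀ N hN, ih]

theorem beattyCount_eq_ceil_sub_ceil {α β : ℝ} (hα : 0 < α) {N : ℤ} (hN : β < N) :
    (beattyCount α β N : ℤ) = ⌈(N + 1 - β) / α⌉ - ⌈(N - β) / α⌉ := by
  set x := (N - β) / α
  set y := (N + 1 - β) / α
  have hx : 0 < x := div_pos (sub_pos.2 hN) hα
  have hxy : x ≤ y := div_le_div_of_nonneg_right (by linarith) hα.le
  have hmem : ∀ n : ℕ, (0 < n ∧ ⌊(n : ℝ) * α + β⌋ = N) ↔ n ∈ Ico ⌈x⌉₊ ⌈y⌉₊ := by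
    intro n
    rw [mem_Ico, Nat.ceil_le, Nat.lt_ceil, Int.floor_eq_iff]
    simp only [x, y, div_le_iff₀ hα, lt_div_iff₀ hα]
    constructor
    · rintro ⟨-, h₁, h₂⟩
      constructor <;> linarith
    · rintro ⟨h₁, h₂⟩
      refine ⟨?_, by linarith, by linarith⟩
      have : (0 : ℝ) < n * α := by linarith
      exact_mod_cast pos_of_mul_pos_left this hα.le
  rw [beattyCount, Nat.card_congr (Equiv.subtypeEquivRight hmem), Nat.card_eq_fintype_card,
    Fintype.card_ofFinset, Nat.card_Ico, Nat.cast_sub (Nat.ceil_mono hxy),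
    Int.natCast_ceil_eq_ceil hx.le, Int.natCast_ceil_eq_ceil (hx.trans_le hxy).le]

theorem ceil_sub_div_eq_of_inv_add_inv_eq {m : ℤ} {α₁ α₂ β₁ β₂ : ℝ} (h1 : α₁ ≠ 0) (h2 : α₂ ≠ 0)
    (hsum : 1 / α₁ + 1 / α₂ = m) (N : ℤ) :
    ⌈(N - β₂) / α₂⌉ = m * N + ⌈-(β₁ / α₁ + β₂ / α₂) - (N - β₁) / α₁⌉ := by
  have h : (N - β₂) / α₂ = -(β₁ / α₁ + β₂ / α₂) - (N - β₁) / α₁ + ((m * N : ℤ) : ℝ) := by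
    push_cast
    rw [← hsum]
    field_simp
    ring
  rw [h, Int.ceil_add_intCast, add_comm]

noncomputable def ceilAddCeilSub (α β t : ℝ) (N : ℤ) : ℤ :=
  ⌈(N - β) / α⌉ + ⌈t - (N - β) / α⌉

theorem beattyCount_add_beattyCount_eq {m : ℤ} {α₁ α₂ β₁ β₂ : ℝ} (h1 : 0 < α₁) (h2 : 0 < α₂)
    (hsum : 1 / α₁ + 1 / α₂ = m) {N : ℤ} (hN₁ : β₁ < N) (hN₂ : β₂ < N) :
    (beattyCount α₁ β₁ N + beattyCount α₂ β₂ N : ℤ) =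
      m + (ceilAddCeilSub α₁ β₁ (-(β₁ / α₁ + β₂ / α₂)) (N + 1) -
        ceilAddCeilSub α₁ β₁ (-(β₁ / α₁ + β₂ / α₂)) N) := by
  have hN := ceil_sub_div_eq_of_inv_add_inv_eq (β₁ := β₁) (β₂ := β₂) h1.ne' h2.ne' hsum N
  have hN' := ceil_sub_div_eq_of_inv_add_inv_eq (β₁ := β₁) (β₂ := β₂) h1.ne' h2.ne' hsum (N + 1)
  rw [beattyCount_eq_ceil_sub_ceil h1 hN₁, beattyCount_eq_ceil_sub_ceil h2 hN₂]
  simp only [ceilAddCeilSub]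
  push_cast at hN' ⊢
  linarith

theorem exists_intCast_eq_of_eventually_ceilAddCeilSub_eq {α : ℝ} (hα : Irrational α)
    (β t : ℝ) {c : ℤ} (hc : ∀ᶠ N in atTop, ceilAddCeilSub α β t N = c) : ∃ z : ℤ, t = z := by
  by_contra ht
  have hfract : 0 < Int.fract t :=
    (Int.fract_nonneg t).lt_of_ne' (Int.fract_ne_zero_iff.2 fun ⟨z, hz⟩ => ht ⟨z, hz.symm⟩)
  have hwindow : ∀ {a b : ℝ} (v : ℤ), a < b →
      (∀ N k : ℤ, (N - β) / α - k ∈ Ioo a b → ceilAddCeilSub α β t N = v) → c = v := by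
    intro a b v hab hv
    obtain ⟨N, ⟨k, hk⟩, hN⟩ := ((hα.inv.frequently_exists_mul_sub_intCast_mem_Ioo
      (add_lt_add_right hab (β / α))).and_eventually hc).exists
    rw [← hN]
    refine hv N k ⟨?_, ?_⟩ <;> linarith [hk.1, hk.2, show (N - β) / α = N * α⁻¹ - β / α by ring]
  have hlow := hwindow (⌊t⌋ + 2) hfract fun N k hk =>
    Int.ceil_add_ceil_sub_of_sub_lt_fract hk.1 hk.2
  have hhigh := hwindow (⌊t⌋ + 1) (Int.fract_lt_one t) fun N k hk =>
    Int.ceil_add_ceil_sub_of_fract_lt_sub hk.1 hk.2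
  omega

theorem eventually_ceilAddCeilSub_intCast {α : ℝ} (hα : Irrational α) (β : ℝ) (z : ℤ) :
    ∀ᶠ N in atTop, ceilAddCeilSub α β z N = z + 1 :=
  (hα.eventually_sub_div_ne_intCast β).mono fun _ hN => Int.ceil_add_ceil_intCast_sub hN z

theorem eventually_beattyCount_add_beattyCount_eq_iff {m : ℕ} {α₁ α₂ β₁ β₂ : ℝ} (h1 : 0 < α₁)
    (h2 : 0 < α₂) (hsum : 1 / α₁ + 1 / α₂ = (m : ℝ)) :
    (∀ᶠ N in atTop, beattyCount α₁ β₁ N + beattyCount α₂ β₂ N = m) ↔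
      ∀ᶠ N in atTop, ceilAddCeilSub α₁ β₁ (-(β₁ / α₁ + β₂ / α₂)) (N + 1) =
        ceilAddCeilSub α₁ β₁ (-(β₁ / α₁ + β₂ / α₂)) N := by
  refine eventually_congr ?_
  filter_upwards [eventually_gt_atTop ⌊max β₁ β₂⌋] with N hN
  have hβ := Int.floor_lt.1 hN
  have hcount := beattyCount_add_beattyCount_eq h1 h2 (by exact_mod_cast hsum)
    ((le_max_left _ _).trans_lt hβ) ((le_max_right _ _).trans_lt hβ)
  rw [← Nat.cast_inj (R := ℤ), Nat.cast_add, hcount]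
  omega

theorem inhomogeneous_pair_mEEC_iff_general (m : ℕ) (α₁ α₂ β₁ β₂ : ℝ)
    (h1 : 0 < α₁) (h2 : 0 < α₂) (hi1 : Irrational α₁)
    (hsum : 1 / α₁ + 1 / α₂ = (m : ℝ)) :
    (∃ N₀ : ℤ, ∀ N : ℤ, N ≥ N₀ → beattyCount α₁ β₁ N + beattyCount α₂ β₂ N = m) ↔
      ∃ z : ℤ, β₁ / α₁ + β₂ / α₂ = (z : ℝ) := by
  rw [← eventually_atTop, eventually_beattyCount_add_beattyCount_eq_iff h1 h2 hsum]
  set G := ceilAddCeilSub α₁ β₁ (-(β₁ / α₁ + β₂ / α₂))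
  constructor
  · intro h
    obtain ⟨c, hc⟩ := exists_eventually_eq_of_eventually_add_one_eq h
    obtain ⟨z, hz⟩ := exists_intCast_eq_of_eventually_ceilAddCeilSub_eq hi1 β₁ _ hc
    exact ⟨-z, by push_cast; linarith⟩
  · rintro ⟨z, hz⟩
    have hG : ∀ᶠ N in atTop, G N = -z + 1 := by
      simpa [G, hz] using eventually_ceilAddCeilSub_intCast hi1 β₁ (-z)
    filter_upwards [hG, (tendsto_atTop_add_const_right atTop 1 tendsto_id).eventually hG]
      with N hN hN'
    exact hN'.trans hN.symm

theorem inhomogeneous_pair_mEEC_iff (m : ℕ) (hm : 0 < m) (α₁ α₂ β₁ β₂ : ℝ)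
    (h1 : 0 < α₁) (h2 : 0 < α₂) (hi1 : Irrational α₁) (hi2 : Irrational α₂)
    (hsum : 1 / α₁ + 1 / α₂ = (m : ℝ)) :
    (∃ N₀ : ℤ, ∀ N : ℤ, N ≥ N₀ → beattyCount α₁ β₁ N + beattyCount α₂ β₂ N = m) ↔
      ∃ z : ℤ, β₁ / α₁ + β₂ / α₂ = (z : ℝ) :=
  inhomogeneous_pair_mEEC_iff_general m α₁ α₂ β₁ β₂ h1 h2 hi1 hsum
end

section
/- Let a₁,...,a_μ, c₁,...,c_ν be positive integers and b₁,...,b_μ, d₁,...,d_ν be any integers. Suppose that for every integer t and every integer x, the number of indices i ∈ {1,...,μ} with x ≡ t·b_i (mod a_i) equals the number of indices j ∈ {1,...,ν} with x ≡ t·d_j (mod c_j). Then μ = ν, and there is a bijection σ : {1,...,μ} → {1,...,ν} such that a_i = c_{σ(i)} and b_i ≡ d_{σ(i)} (mod a_i) for every i. -/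
/-!
Fix a test progression `S(A, B)` and a common multiple `L` of all moduli, and count, over
`t, k ∈ [0, L)`, the progressions containing `x = tB + kA` in the system dilated by `t`. A
progression `S(a, b)` contributes `L² · gcd(a, A, B - b) / a`. Writing the gcd as
`∑_{e ∣ gcd} φ(e)` and inverting over the divisors of `A` (Möbius), the hypothesis forces both
systems to have the same total density `∑ 1/a_i` of progressions contained in `S(A, B)`, for every
`A > 0` and `B`. Now take a progression `S(M, b)` of the first system with `M` maximal: some
progression of the second system lies in `S(M, b)`, its modulus is a multiple of `M`, and by the
same argument with the roles exchanged it divides a modulus of the first system, so it is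
`S(M, b)` itself. Removing the pair keeps all densities equal, and induction finishes.
-/

open Finset

theorem card_filter_range_dvd_sub {p N : ℕ} (hp : 0 < p) (hpN : p ∣ N) (k₀ : ℤ) :
    #{k ∈ range N | (p : ℤ) ∣ ((k : ℕ) : ℤ) - k₀} = N / p := by
  have : NeZero p := ⟨hp.ne'⟩
  have hmod : ∀ k : ℕ, (p : ℤ) ∣ k - k₀ ↔ k ≡ (k₀ : ZMod p).val [MOD p] := by
    intro k
    rw [← ZMod.intCast_eq_intCast_iff_dvd_sub, ← ZMod.natCast_eq_natCast_iff,
      ZMod.natCast_zmod_val, Int.cast_natCast, eq_comm]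
  rw [filter_congr fun k _ => hmod k, ← Nat.count_eq_card_filter_range, Nat.count_modEq_card _ hp,
    Nat.mod_eq_zero_of_dvd hpN]
  simp

theorem exists_dvd_mul_add_iff {a : ℤ} (ha : 0 < a) {A c : ℤ} (hc : (Int.gcd a A : ℤ) ∣ c) :
    ∃ k₀ : ℤ, ∀ k : ℤ, a ∣ k * A + c ↔ a / Int.gcd a A ∣ k - k₀ := by
  obtain ⟨c', rfl⟩ := hc
  refine ⟨-c' * Int.gcdB a A, fun k => ?_⟩
  have hsplit : k * A + Int.gcd a A * c' =
      (k - -c' * Int.gcdB a A) * A + a * (c' * Int.gcdA a A) := by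
    rw [Int.gcd_eq_gcd_ab]; ring
  rw [hsplit, dvd_add_left (dvd_mul_right a _)]
  constructor
  · intro h
    have := Int.ModEq.cancel_right_div_gcd ha (a := k - -c' * Int.gcdB a A) (b := 0) (c := A)
      (by rw [zero_mul]; exact (Int.modEq_zero_iff_dvd.mpr h))
    exact Int.modEq_zero_iff_dvd.mp this
  · intro h
    calc a = a / Int.gcd a A * Int.gcd a A := (Int.ediv_mul_cancel (Int.gcd_dvd_left _ _)).symm
      _ ∣ _ := mul_dvd_mul h (Int.gcd_dvd_right _ _)

theorem card_filter_range_dvd_mul_add {a N : ℕ} (ha : 0 < a) (haN : a ∣ N) (A c : ℤ) :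
    (#{k ∈ range N | (a : ℤ) ∣ ((k : ℕ) : ℤ) * A + c} : ℚ) =
      if (Int.gcd a A : ℤ) ∣ c then (N : ℚ) * Int.gcd a A / a else 0 := by
  split_ifs with hc
  · obtain ⟨k₀, hk₀⟩ := exists_dvd_mul_add_iff (by exact_mod_cast ha) hc
    have hga : Int.gcd a A ∣ a := by exact_mod_cast Int.gcd_dvd_left (a : ℤ) A
    have hg0 : 0 < Int.gcd a A := Int.gcd_pos_of_ne_zero_left _ (by omega)
    have hp : 0 < a / Int.gcd a A := Nat.div_pos (Nat.le_of_dvd ha hga) hg0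
    have hpN : a / Int.gcd a A ∣ N := (Nat.div_dvd_of_dvd hga).trans haN
    simp only [hk₀]
    rw [← Int.natCast_div, card_filter_range_dvd_sub hp hpN,
      Nat.cast_div hpN (by exact_mod_cast hp.ne'),
      Nat.cast_div hga (by exact_mod_cast hg0.ne')]
    field_simp
  · rw [filter_false_of_mem, card_empty, Nat.cast_zero]
    intro k _ hk
    exact hc ((dvd_add_right (dvd_mul_of_dvd_right (Int.gcd_dvd_right _ _) _)).mp
      ((Int.gcd_dvd_left _ _).trans hk))

theorem sum_range_card_filter_dvd_mul_add {a L : ℕ} (ha : 0 < a) (haL : a ∣ L) (A m : ℤ) :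
    ∑ t ∈ range L, (#{k ∈ range L | (a : ℤ) ∣ ((k : ℕ) : ℤ) * A + t * m} : ℚ) =
      (L : ℚ) ^ 2 * Int.gcd (Int.gcd a A) m / a := by
  simp only [card_filter_range_dvd_mul_add ha haL]
  set g := Int.gcd a A
  have hg0 : 0 < g := Int.gcd_pos_of_ne_zero_left _ (by omega)
  have hgL : g ∣ L := (show g ∣ a by exact_mod_cast Int.gcd_dvd_left (a : ℤ) A).trans haL
  have hcount := card_filter_range_dvd_mul_add hg0 hgL m 0
  simp only [add_zero, dvd_zero, if_true] at hcount
  rw [← sum_filter, sum_const, nsmul_eq_mul, hcount]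
  field_simp

theorem gcd_gcd_eq_sum_totient {A : ℕ} (hA : A ≠ 0) (a : ℕ) (m : ℤ) :
    Int.gcd (Int.gcd a A) m = ∑ e ∈ A.divisors with e ∣ a ∧ (e : ℤ) ∣ m, Nat.totient e := by
  rw [← Nat.sum_totient (Int.gcd _ m)]
  congr 1
  ext e
  have hg : Int.gcd (Int.gcd a A) m ≠ 0 := by simp [hA]
  simp only [Nat.mem_divisors, mem_filter, ne_eq, hg, hA, not_false_eq_true, and_true]
  rw [← Int.natCast_dvd_natCast, Int.dvd_coe_gcd_iff, Int.dvd_coe_gcd_iff, Int.natCast_dvd_natCast,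
    Int.natCast_dvd_natCast]
  tauto

theorem eq_of_sum_divisors_totient_mul_eq {R : Type*} [CommRing R] [IsDomain R] [CharZero R]
    {f g : ℕ → R}
    (h : ∀ n > 0, ∑ e ∈ n.divisors, (Nat.totient e : R) * f e =
      ∑ e ∈ n.divisors, (Nat.totient e : R) * g e)
    {n : ℕ} (hn : 0 < n) : f n = g n := by
  have key := (ArithmeticFunction.sum_eq_iff_sum_smul_moebius_eq
    (f := fun e => (Nat.totient e : R) * (f e - g e)) (g := 0)).mp
    (fun n hn => by simp [mul_sub, sum_sub_distrib, h n hn]) n hn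
  simpa [Nat.totient_pos.mpr hn |>.ne', sub_eq_zero, eq_comm] using key

namespace APSystem

variable {ι : Type*} [Fintype ι]

def coverCount (a : ι → ℕ) (b : ι → ℤ) (t x : ℤ) : ℕ := #{i | (a i : ℤ) ∣ x - t * b i}

/-- `S(a i, b i) ⊆ S(A, B)` exactly when `A ∣ a i` and `A ∣ b i - B`; `S(a i, b i)` has density
`1 / a i`. -/
def containedDensity (a : ι → ℕ) (b : ι → ℤ) (A : ℕ) (B : ℤ) : ℚ :=
  ∑ i with A ∣ a i ∧ (A : ℤ) ∣ b i - B, (a i : ℚ)⁻¹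

theorem sum_sum_coverCount {a : ι → ℕ} (ha : ∀ i, 0 < a i) (b : ι → ℤ) {L : ℕ}
    (haL : ∀ i, a i ∣ L) {A : ℕ} (hA : A ≠ 0) (B : ℤ) :
    ∑ t ∈ range L, ∑ k ∈ range L, (coverCount a b t (t * B + k * A) : ℚ) =
      (L : ℚ) ^ 2 * ∑ e ∈ A.divisors, (Nat.totient e : ℚ) * containedDensity a b e B := by
  calc ∑ t ∈ range L, ∑ k ∈ range L, (coverCount a b t (t * B + k * A) : ℚ)
      = ∑ i, ∑ t ∈ range L,
          (#{k ∈ range L | (a i : ℤ) ∣ ((k : ℕ) : ℤ) * A + t * (B - b i)} : ℚ) := by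
        simp only [coverCount, natCast_card_filter]
        rw [sum_congr rfl fun t _ => sum_comm, sum_comm]
        refine sum_congr rfl fun i _ => sum_congr rfl fun t _ => sum_congr rfl fun k _ => ?_
        rw [show ((t : ℕ) : ℤ) * B + ((k : ℕ) : ℤ) * A - t * b i = k * A + t * (B - b i) by ring]
    _ = ∑ i, (L : ℚ) ^ 2 * Int.gcd (Int.gcd (a i) A) (B - b i) / a i :=
        sum_congr rfl fun i _ => sum_range_card_filter_dvd_mul_add (ha i) (haL i) _ _
    _ = (L : ℚ) ^ 2 * ∑ e ∈ A.divisors, (Nat.totient e : ℚ) * containedDensity a b e B := by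
        simp only [gcd_gcd_eq_sum_totient hA, containedDensity, sum_filter, mul_sum]
        rw [sum_comm]
        refine sum_congr rfl fun i _ => ?_
        push_cast
        rw [mul_sum, sum_div]
        refine sum_congr rfl fun e _ => ?_
        simp only [dvd_sub_comm (b := B)]
        split_ifs <;> simp [div_eq_mul_inv, mul_assoc]

theorem containedDensity_pos_iff {a : ι → ℕ} (ha : ∀ i, 0 < a i) (b : ι → ℤ) (A : ℕ) (B : ℤ) :
    0 < containedDensity a b A B ↔ ∃ i, A ∣ a i ∧ (A : ℤ) ∣ b i - B := by
  rw [containedDensity, sum_pos_iff_of_nonneg fun _ _ => by positivity]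
  simp [ha]

theorem containedDensity_eq_add_subtype_ne [DecidableEq ι] (a : ι → ℕ) (b : ι → ℤ) (i₀ : ι)
    (A : ℕ) (B : ℤ) :
    containedDensity a b A B =
      (if A ∣ a i₀ ∧ (A : ℤ) ∣ b i₀ - B then (a i₀ : ℚ)⁻¹ else 0) +
        containedDensity (fun i : {i // i ≠ i₀} => a i) (fun i => b i) A B := by
  rw [containedDensity, containedDensity, sum_filter, sum_filter,
    Fintype.sum_eq_add_sum_subtype_ne _ i₀]

variable {κ : Type*} [Fintype κ] {a : ι → ℕ} {c : κ → ℕ} {b : ι → ℤ} {d : κ → ℤ}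

theorem containedDensity_eq_of_coverCount_eq (ha : ∀ i, 0 < a i) (hc : ∀ j, 0 < c j)
    (h : ∀ t x, coverCount a b t x = coverCount c d t x) {A : ℕ} (hA : 0 < A) (B : ℤ) :
    containedDensity a b A B = containedDensity c d A B := by
  refine eq_of_sum_divisors_totient_mul_eq (f := (containedDensity a b · B))
    (g := (containedDensity c d · B)) (fun n hn => ?_) hA
  set L := (∏ i, a i) * ∏ j, c j
  have hL : (L : ℚ) ^ 2 ≠ 0 := by
    have := Finset.prod_pos fun i (_ : i ∈ univ) => ha i
    have := Finset.prod_pos fun j (_ : j ∈ univ) => hc j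
    positivity
  apply mul_left_cancel₀ hL
  rw [← sum_sum_coverCount ha b (fun i => (dvd_prod_of_mem a (mem_univ i)).mul_right _) hn.ne',
    ← sum_sum_coverCount hc d (fun j => (dvd_prod_of_mem c (mem_univ j)).mul_left _) hn.ne']
  simp only [h]

theorem exists_match_of_containedDensity_eq (ha : ∀ i, 0 < a i) (hc : ∀ j, 0 < c j)
    (h : ∀ A > 0, ∀ B, containedDensity a b A B = containedDensity c d A B) {i₀ : ι}
    (hi₀ : ∀ i, a i ≤ a i₀) : ∃ j, a i₀ = c j ∧ (a i₀ : ℤ) ∣ b i₀ - d j := by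
  obtain ⟨j, hdvd, hres⟩ := (containedDensity_pos_iff hc d (a i₀) (b i₀)).mp
    (h _ (ha i₀) _ ▸ (containedDensity_pos_iff ha b _ _).mpr ⟨i₀, dvd_rfl, by simp⟩)
  obtain ⟨i, hi, -⟩ := (containedDensity_pos_iff ha b (c j) (d j)).mp
    ((h _ (hc j) _).symm ▸ (containedDensity_pos_iff hc d _ _).mpr ⟨j, dvd_rfl, by simp⟩)
  exact ⟨j, le_antisymm (Nat.le_of_dvd (hc j) hdvd) ((Nat.le_of_dvd (ha i) hi).trans (hi₀ i)),
    dvd_sub_comm.mp hres⟩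

theorem containedDensity_subtype_ne_eq [DecidableEq ι] [DecidableEq κ]
    (h : ∀ A > 0, ∀ B, containedDensity a b A B = containedDensity c d A B) {i₀ : ι} {j₀ : κ}
    (hmod : a i₀ = c j₀) (hres : (a i₀ : ℤ) ∣ b i₀ - d j₀) {A : ℕ} (hA : 0 < A) (B : ℤ) :
    containedDensity (fun i : {i // i ≠ i₀} => a i) (fun i => b i) A B =
      containedDensity (fun j : {j // j ≠ j₀} => c j) (fun j => d j) A B := by
  have hpair : (A : ℤ) ∣ a i₀ → ((A : ℤ) ∣ b i₀ - B ↔ (A : ℤ) ∣ d j₀ - B) := fun hA' => by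
    rw [show b i₀ - B = b i₀ - d j₀ + (d j₀ - B) by ring, dvd_add_right (hA'.trans hres)]
  have := h A hA B
  rwa [containedDensity_eq_add_subtype_ne _ _ i₀, containedDensity_eq_add_subtype_ne _ _ j₀, ← hmod,
    if_congr (and_congr_right fun hA' => hpair (Int.natCast_dvd_natCast.mpr hA')) rfl rfl,
    add_right_inj] at this

theorem exists_equiv_of_containedDensity_eq (ha : ∀ i, 0 < a i) (hc : ∀ j, 0 < c j)
    (h : ∀ A > 0, ∀ B, containedDensity a b A B = containedDensity c d A B) :
    ∃ σ : ι ≃ κ, ∀ i, a i = c (σ i) ∧ (a i : ℤ) ∣ b i - d (σ i) := by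
  classical
  induction hn : Fintype.card ι generalizing ι κ with
  | zero =>
    have : IsEmpty ι := Fintype.card_eq_zero_iff.mp hn
    have : IsEmpty κ := ⟨fun j => by
      obtain ⟨i, -⟩ := (containedDensity_pos_iff ha b (c j) (d j)).mp
        (h _ (hc j) _ ▸ (containedDensity_pos_iff hc d _ _).mpr ⟨j, dvd_rfl, by simp⟩)
      exact isEmptyElim i⟩
    exact ⟨Equiv.equivOfIsEmpty ι κ, isEmptyElim⟩
  | succ n ih =>
    have : Nonempty ι := Fintype.card_pos_iff.mp (by omega)
    obtain ⟨i₀, hi₀⟩ := Finite.exists_max a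
    obtain ⟨j₀, hmod, hres⟩ := exists_match_of_containedDensity_eq ha hc h hi₀
    obtain ⟨σ, hσ⟩ := ih (fun i : {i // i ≠ i₀} => ha i) (fun j : {j // j ≠ j₀} => hc j)
      (fun A hA B => containedDensity_subtype_ne_eq h hmod hres hA B)
      (by simp [Fintype.card_subtype_compl, hn])
    refine ⟨(Equiv.optionSubtypeNe i₀).symm.trans ((Equiv.optionCongr σ).trans
      (Equiv.optionSubtypeNe j₀)), fun i => ?_⟩
    by_cases hi : i = i₀
    · subst hi
      simpa using ⟨hmod, hres⟩
    · simpa [Equiv.optionSubtypeNe_symm_of_ne hi] using hσ ⟨i, hi⟩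

end APSystem

theorem complementary_AP_systems_pair_off (μ ν : ℕ)
    (a : Fin μ → ℕ) (c : Fin ν → ℕ) (ha : ∀ i, 0 < a i) (hc : ∀ j, 0 < c j)
    (b : Fin μ → ℤ) (d : Fin ν → ℤ)
    (h : ∀ t x : ℤ,
      (Finset.univ.filter fun i : Fin μ => (a i : ℤ) ∣ x - t * b i).card =
      (Finset.univ.filter fun j : Fin ν => (c j : ℤ) ∣ x - t * d j).card) :
    μ = ν ∧ ∃ σ : Fin μ ≃ Fin ν, ∀ i, a i = c (σ i) ∧ (a i : ℤ) ∣ b i - d (σ i) := by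
  obtain ⟨σ, hσ⟩ := APSystem.exists_equiv_of_containedDensity_eq ha hc
    fun A hA B => APSystem.containedDensity_eq_of_coverCount_eq ha hc h hA B
  exact ⟨by simpa using Fintype.card_congr σ, σ, hσ⟩
end

section
/- Let p be a prime, l a non-negative integer, l₁,...,l_χ integers each strictly greater than l, and b, d₁,...,d_χ any integers. Suppose that as sets {x ∈ ℤ : x ≡ b (mod p^l)} ⊆ ⋃_{j=1}^χ {x ∈ ℤ : x ≡ d_j (mod p^{l_j})}. Then there is a subset J ⊆ {1,...,χ} such that the residue classes {x : x ≡ d_j (mod p^{l_j})} for j ∈ J are pairwise disjoint and their union equals {x : x ≡ b (mod p^l)}. -/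
theorem prime_power_progression_exact_subcover (p : ℕ) (hp : p.Prime)
    (l : ℕ) (χ : ℕ) (lj : Fin χ → ℕ) (hlj : ∀ j, l < lj j)
    (b : ℤ) (d : Fin χ → ℤ)
    (hsub : ∀ x : ℤ, (p : ℤ) ^ l ∣ x - b → ∃ j, (p : ℤ) ^ (lj j) ∣ x - d j) :
    ∃ J : Finset (Fin χ),
      (∀ j ∈ J, ∀ j' ∈ J, j ≠ j' →
        ∀ x : ℤ, ¬((p : ℤ) ^ (lj j) ∣ x - d j ∧ (p : ℤ) ^ (lj j') ∣ x - d j')) ∧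
      (∀ x : ℤ, (p : ℤ) ^ l ∣ x - b ↔ ∃ j ∈ J, (p : ℤ) ^ (lj j) ∣ x - d j) := by
  classical
  -- weight function used to pick a canonical representative:
  -- minimize the level `lj j`, breaking ties by index.
  set f : Fin χ → ℕ := fun j => lj j * χ + j.val with hf
  have hA : ∀ (j : Fin χ) (x : ℤ), (p:ℤ)^(lj j) ∣ x - d j → (p:ℤ)^l ∣ x - d j :=
    fun j x h => dvd_trans (pow_dvd_pow _ (le_of_lt (hlj j))) h
  -- classes that meet are nested
  have hnest : ∀ (j j' : Fin χ) (x : ℤ), lj j ≤ lj j' →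
      (p:ℤ)^(lj j) ∣ x - d j → (p:ℤ)^(lj j') ∣ x - d j' →
      ∀ y, (p:ℤ)^(lj j') ∣ y - d j' → (p:ℤ)^(lj j) ∣ y - d j := by
    intro j j' x hle h1 h2 y hy
    have h2' : (p:ℤ)^(lj j) ∣ x - d j' := dvd_trans (pow_dvd_pow _ hle) h2
    have hy' : (p:ℤ)^(lj j) ∣ y - d j' := dvd_trans (pow_dvd_pow _ hle) hy
    have hrw : y - d j = (y - d j') - (x - d j') + (x - d j) := by ring
    rw [hrw]
    exact dvd_add (dvd_sub hy' h2') h1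
  set good : Fin χ → Prop := fun j =>
    (p:ℤ)^l ∣ d j - b ∧
    ∀ j', (∀ y, (p:ℤ)^(lj j) ∣ y - d j → (p:ℤ)^(lj j') ∣ y - d j') → f j ≤ f j'
    with hgood
  refine ⟨Finset.univ.filter good, ?_, ?_⟩
  · -- disjointness
    have main : ∀ j j' : Fin χ, good j → good j' → lj j ≤ lj j' →
        ∀ x : ℤ, (p:ℤ)^(lj j) ∣ x - d j → (p:ℤ)^(lj j') ∣ x - d j' → j = j' := by
      intro j j' gj gj' hle x hxj hxj'
      have hsub1 : ∀ y, (p:ℤ)^(lj j') ∣ y - d j' → (p:ℤ)^(lj j) ∣ y - d j :=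
        hnest j j' x hle hxj hxj'
      have hf1 : f j' ≤ f j := gj'.2 j hsub1
      have heq : lj j = lj j' := by
        rcases lt_or_eq_of_le hle with hlt | h
        · exfalso
          have h1 : (lj j + 1) * χ ≤ lj j' * χ := Nat.mul_le_mul_right _ hlt
          have h2 : j.val < χ := j.isLt
          have h3 : f j < f j' := by
            have : lj j * χ + j.val < (lj j + 1) * χ := by
              rw [Nat.succ_mul]; omega
            calc f j = lj j * χ + j.val := rfl
              _ < (lj j + 1) * χ := this
              _ ≤ lj j' * χ := h1
              _ ≤ lj j' * χ + j'.val := Nat.le_add_right _ _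
          omega
        · exact h
      have hsub2 : ∀ y, (p:ℤ)^(lj j) ∣ y - d j → (p:ℤ)^(lj j') ∣ y - d j' :=
        hnest j' j x (le_of_eq heq.symm) hxj' hxj
      have hf2 : f j ≤ f j' := gj.2 j' hsub2
      have hfe : f j = f j' := Nat.le_antisymm hf2 hf1
      have : lj j * χ + j.val = lj j' * χ + j'.val := hfe
      rw [heq] at this
      exact Fin.ext (Nat.add_left_cancel this)
    intro j hj j' hj' hne x hx
    obtain ⟨hxj, hxj'⟩ := hx
    have gj : good j := (Finset.mem_filter.mp hj).2
    have gj' : good j' := (Finset.mem_filter.mp hj').2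
    rcases le_total (lj j) (lj j') with hle | hle
    · exact hne (main j j' gj gj' hle x hxj hxj')
    · exact hne ((main j' j gj' gj hle x hxj' hxj).symm)
  · intro x
    constructor
    · intro hxb
      obtain ⟨j0, hj0⟩ := hsub x hxb
      set S := Finset.univ.filter (fun j => (p:ℤ)^(lj j) ∣ x - d j) with hS
      have hj0S : j0 ∈ S := by simp [hS, hj0]
      obtain ⟨j, hjS, hjmin⟩ := S.exists_min_image f ⟨j0, hj0S⟩
      have hjx : (p:ℤ)^(lj j) ∣ x - d j := (Finset.mem_filter.mp hjS).2
      refine ⟨j, Finset.mem_filter.mpr ⟨Finset.mem_univ _, ?_, ?_⟩, hjx⟩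
      · have h1 : (p:ℤ)^l ∣ x - d j := hA j x hjx
        have hrw : d j - b = (x - b) - (x - d j) := by ring
        rw [hrw]; exact dvd_sub hxb h1
      · intro j' hsub'
        exact hjmin j' (Finset.mem_filter.mpr ⟨Finset.mem_univ _, hsub' x hjx⟩)
    · rintro ⟨j, hj, hxj⟩
      have h1 : (p:ℤ)^l ∣ x - d j := hA j x hxj
      have hrel : (p:ℤ)^l ∣ d j - b := ((Finset.mem_filter.mp hj).2).1
      have hrw : x - b = (x - d j) + (d j - b) := by ring
      rw [hrw]; exact dvd_add h1 hrel
end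

section
/- Let α be a positive irrational real number and β any real number, and set θ = 1/α and γ = −β/α. Then there exists N₀ such that for every integer N ≥ N₀, the number of positive integers n with ⌊nα + β⌋ = N equals ⌊(N+1)θ + γ⌋ − ⌊Nθ + γ⌋. -/
/-!
For `α > 0`, `⌊nα + β⌋ = N` exactly when `(N - β)/α ≤ n < (N + 1 - β)/α`, so once `(N - β)/α > 0`
the count is `⌈(N + 1 - β)/α⌉ - ⌈(N - β)/α⌉`. This agrees with the difference of floors as soon as
neither endpoint is an integer, and since `α` is irrational, `(N - β)/α` is an integer for at most
one `N`.
-/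

open Filter Set

lemma Nat.card_subtype_le_natCast_lt {K : Type*} [Semiring K] [LinearOrder K] [IsOrderedRing K]
    [FloorSemiring K] (a b : K) :
    Nat.card {n : ℕ // a ≤ n ∧ (n : K) < b} = ⌈b⌉₊ - ⌈a⌉₊ := by
  have hIco : {n : ℕ | a ≤ n ∧ (n : K) < b} = Ico ⌈a⌉₊ ⌈b⌉₊ := by
    ext n
    simp [Nat.ceil_le, Nat.lt_ceil]
  rw [← coe_ofPred, hIco, Nat.card_coe_set_eq, ← Finset.coe_Ico, ncard_coe_finset, Nat.card_Ico]

lemma Int.floor_mul_add_eq_iff {K : Type*} [Field K] [LinearOrder K] [IsStrictOrderedRing K]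
    [FloorRing K] {α : K} (hα : 0 < α) (x β : K) (N : ℤ) :
    ⌊x * α + β⌋ = N ↔ (N - β) / α ≤ x ∧ x < (N + 1 - β) / α := by
  rw [Int.floor_eq_iff, div_le_iff₀ hα, lt_div_iff₀ hα]
  constructor <;> rintro ⟨h₁, h₂⟩ <;> constructor <;> linarith

lemma beattyCount_eq_floor_sub_floor {α β : ℝ} (hα : 0 < α) {N : ℤ}
    (hpos : 0 < ((N : ℝ) - β) / α) (hN : ((N : ℝ) - β) / α ∉ range Int.cast)
    (hN₁ : ((N : ℝ) + 1 - β) / α ∉ range Int.cast) :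
    (beattyCount α β N : ℤ) = ⌊((N : ℝ) + 1 - β) / α⌋ - ⌊((N : ℝ) - β) / α⌋ := by
  set a := ((N : ℝ) - β) / α
  set b := ((N : ℝ) + 1 - β) / α
  have hab : a ≤ b := div_le_div_of_nonneg_right (by linarith) hα.le
  have hcount : beattyCount α β N = Nat.card {n : ℕ // a ≤ n ∧ (n : ℝ) < b} := by
    refine Nat.card_congr (Equiv.subtypeEquivRight fun n => ?_)
    rw [Int.floor_mul_add_eq_iff hα]
    exact and_iff_right_of_imp fun h => Nat.cast_pos.mp (hpos.trans_le h.1)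
  rw [hcount, Nat.card_subtype_le_natCast_lt, Nat.cast_sub (Nat.ceil_mono hab),
    Int.natCast_ceil_eq_ceil hpos.le, Int.natCast_ceil_eq_ceil (hpos.le.trans hab),
    (Int.ceil_eq_floor_add_one_iff_notMem a).2 hN, (Int.ceil_eq_floor_add_one_iff_notMem b).2 hN₁]
  ring

lemma Irrational.subsingleton_setOf_sub_div_mem_range {α : ℝ} (h : Irrational α) (β : ℝ) :
    {N : ℤ | ((N : ℝ) - β) / α ∈ range Int.cast}.Subsingleton := by
  rintro N₁ ⟨m₁, hm₁⟩ N₂ ⟨m₂, hm₂⟩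
  have hα := h.ne_zero
  rw [eq_div_iff hα] at hm₁ hm₂
  by_contra hne
  have hm : m₁ - m₂ ≠ 0 := by
    rintro hm
    rw [sub_eq_zero.1 hm] at hm₁
    exact hne (by exact_mod_cast sub_left_injective (hm₁.symm.trans hm₂))
  exact (h.intCast_mul hm).ne_int (N₁ - N₂) (by push_cast; linarith)

lemma Irrational.eventually_sub_div_notMem_range {α : ℝ} (h : Irrational α) (β : ℝ) :
    ∀ᶠ N : ℤ in atTop, ((N : ℝ) - β) / α ∉ range Int.cast :=
  atTop_le_cofinite (h.subsingleton_setOf_sub_div_mem_range β).finite.eventually_cofinite_notMem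

theorem beatty_count_eq_floor_diff (α β : ℝ) (hα : 0 < α) (hirr : Irrational α) :
    ∃ N₀ : ℤ, ∀ N : ℤ, N ≥ N₀ →
      (beattyCount α β N : ℤ) =
        ⌊((N : ℝ) + 1) * (1 / α) + (-β / α)⌋ - ⌊(N : ℝ) * (1 / α) + (-β / α)⌋ := by
  have hpos : ∀ᶠ N : ℤ in atTop, 0 < ((N : ℝ) - β) / α :=
    (tendsto_intCast_atTop_atTop.eventually_gt_atTop β).mono fun N hN => div_pos (sub_pos.2 hN) hα
  have hgood := hirr.eventually_sub_div_notMem_range β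
  have hgood₁ : ∀ᶠ N : ℤ in atTop, ((N : ℝ) + 1 - β) / α ∉ range Int.cast := by
    simpa using (tendsto_atTop_add_const_right atTop 1 tendsto_id).eventually hgood
  obtain ⟨N₀, hN₀⟩ := eventually_atTop.1 (hpos.and (hgood.and hgood₁))
  refine ⟨N₀, fun N hN => ?_⟩
  obtain ⟨hNpos, hN, hN₁⟩ := hN₀ N hN
  have hθγ (x : ℝ) : x * (1 / α) + -β / α = (x - β) / α := by ring
  rw [hθγ, hθγ, beattyCount_eq_floor_sub_floor hα hNpos hN hN₁]
end

section
/- With the notation of the fractional Beatty setup: for every positive integer N, R(qN − 1) = pN − ⌈p/q⌉ if p₁ < p₀, and R(qN − 1) = pN − ⌊p/q⌋ if p₁ ≥ p₀. -/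
open scoped BigOperators

/-- `r(N)`: the number of pairs `(i, n)`, `i ∈ {1,2}`, `n ≥ 1`, with `⌊n·αᵢ⌋ = N`. -/
noncomputable def fracBeattyR (α₁ α₂ : ℝ) (N : ℤ) : ℕ :=
  beattyCount α₁ 0 N + beattyCount α₂ 0 N

/-- `R(N) = Σ_{M=1}^N r(M)` (so `R(0) = 0`). -/
noncomputable def fracBeattyRsum (α₁ α₂ : ℝ) (n : ℕ) : ℕ :=
  ∑ M ∈ Finset.Icc 1 n, fracBeattyR α₁ α₂ (M : ℤ)

/-!
For irrational `α > 0` the `n ≥ 1` with `⌊n α⌋ = M` are the integers in `(M/α, (M+1)/α]`, so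
the sum telescopes to `R(m) = Σᵢ (⌊(m+1)/αᵢ⌋ - ⌊1/αᵢ⌋)`.
At `m + 1 = qN` the two terms `qN/α₁` and `qN/α₂` are irrational and add up to the integer
`pN`, so their floors add up to `pN - 1`. What remains is `⌊1/α₁⌋ + ⌊1/α₂⌋`, and since
`1/α₁ + 1/α₂ = p/q` this is `⌊p/q⌋` or `⌊p/q⌋ - 1` according as `{1/α₁}` lies below or above
`{p/q} = p₀/q`, which is decided by comparing `p₁` with `p₀`.
-/

theorem Irrational.ceil_eq_floor_add_one {x : ℝ} (h : Irrational x) : ⌈x⌉ = ⌊x⌋ + 1 :=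
  (Int.ceil_eq_floor_add_one_iff_notMem x).2 fun ⟨m, hm⟩ ↦ h.ne_int m hm.symm

theorem Irrational.floor_add_floor_intCast_sub {x : ℝ} (h : Irrational x) (k : ℤ) :
    ⌊x⌋ + ⌊k - x⌋ = k - 1 := by
  rw [sub_eq_add_neg, Int.floor_intCast_add, Int.floor_neg, h.ceil_eq_floor_add_one]
  ring

section FloorSub

variable {R : Type*} [CommRing R] [LinearOrder R] [IsStrictOrderedRing R] [FloorRing R] {a b : R}

theorem Int.floor_sub_of_fract_le (h : Int.fract b ≤ Int.fract a) : ⌊a - b⌋ = ⌊a⌋ - ⌊b⌋ := by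
  rw [Int.floor_eq_iff]
  have ha := Int.floor_add_fract a
  have hb := Int.floor_add_fract b
  push_cast
  constructor <;> linarith [Int.fract_lt_one a, Int.fract_nonneg b]

theorem Int.floor_sub_of_fract_lt (h : Int.fract a < Int.fract b) :
    ⌊a - b⌋ = ⌊a⌋ - ⌊b⌋ - 1 := by
  rw [Int.floor_eq_iff]
  have ha := Int.floor_add_fract a
  have hb := Int.floor_add_fract b
  push_cast
  constructor <;> linarith [Int.fract_nonneg a, Int.fract_lt_one b]

end FloorSub

section Beatty

variable {α : ℝ}

theorem beattyCount_zero_eq_floor_sub_floor (h0 : 0 < α) (hα : Irrational α) (M : ℕ) :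
    (beattyCount α 0 M : ℤ) = ⌊((M : ℝ) + 1) / α⌋ - ⌊(M : ℝ) / α⌋ := by
  have hM : (0 : ℝ) ≤ M / α := by positivity
  have hM₁ : (0 : ℝ) ≤ (M + 1) / α := by positivity
  have hmem (n : ℕ) : (0 < n ∧ ⌊(n : ℝ) * α + 0⌋ = M) ↔
      n ∈ Finset.Ioc ⌊(M : ℝ) / α⌋₊ ⌊((M : ℝ) + 1) / α⌋₊ := by
    rw [Finset.mem_Ioc, Nat.floor_lt hM, Nat.le_floor_iff hM₁, div_lt_iff₀ h0,
      le_div_iff₀ h0, add_zero, Int.floor_eq_iff]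
    push_cast
    constructor
    · rintro ⟨hn, hlo, hhi⟩
      -- `n α` is irrational, so it can equal neither `M` nor `M + 1`
      have hirr : Irrational (n * α) := hα.natCast_mul hn.ne'
      refine ⟨hlo.lt_of_ne ?_, hhi.le⟩
      exact_mod_cast (hirr.ne_nat M).symm
    · rintro ⟨hlo, hhi⟩
      have hn : 0 < n := by
        have : (0 : ℝ) < n := by nlinarith
        exact_mod_cast this
      have hirr : Irrational (n * α) := hα.natCast_mul hn.ne'
      refine ⟨hn, hlo.le, hhi.lt_of_ne ?_⟩
      exact_mod_cast hirr.ne_nat (M + 1)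
  have hmono : ⌊(M : ℝ) / α⌋₊ ≤ ⌊((M : ℝ) + 1) / α⌋₊ :=
    Nat.floor_le_floor (div_le_div_of_nonneg_right (by linarith) h0.le)
  rw [beattyCount, Nat.card_congr (Equiv.subtypeEquivRight hmem), Nat.card_eq_fintype_card,
    Fintype.card_coe, Nat.card_Ioc, Nat.cast_sub hmono, Int.natCast_floor_eq_floor hM,
    Int.natCast_floor_eq_floor hM₁]

theorem sum_beattyCount_Icc (h0 : 0 < α) (hα : Irrational α) (m : ℕ) :
    (∑ M ∈ Finset.Icc 1 m, beattyCount α 0 M : ℤ) = ⌊((m : ℝ) + 1) / α⌋ - ⌊1 / α⌋ := by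
  have := Finset.sum_Ico_sub (fun M : ℕ ↦ ⌊(M : ℝ) / α⌋) (by omega : 1 ≤ m + 1)
  push_cast at this ⊢
  rw [← Finset.Ico_add_one_right_eq_Icc, ← this]
  exact Finset.sum_congr rfl fun M _ ↦ beattyCount_zero_eq_floor_sub_floor h0 hα M

end Beatty

theorem fracBeattyRsum_eq {α₁ α₂ : ℝ} (h1 : 0 < α₁) (h2 : 0 < α₂) (hi1 : Irrational α₁)
    (hi2 : Irrational α₂) (m : ℕ) :
    (fracBeattyRsum α₁ α₂ m : ℤ) =
      ⌊((m : ℝ) + 1) / α₁⌋ + ⌊((m : ℝ) + 1) / α₂⌋ - (⌊1 / α₁⌋ + ⌊1 / α₂⌋) := by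
  rw [fracBeattyRsum, Nat.cast_sum]
  simp only [fracBeattyR, Nat.cast_add, Finset.sum_add_distrib]
  rw [sum_beattyCount_Icc h1 hi1, sum_beattyCount_Icc h2 hi2]
  ring

theorem fractional_beatty_partial_sums_general (p q : ℕ) (hq : 0 < q)
    (α₁ α₂ : ℝ) (h1 : 0 < α₁) (h2 : 0 < α₂)
    (hi1 : Irrational α₁) (hi2 : Irrational α₂)
    (hsum : 1 / α₁ + 1 / α₂ = (p : ℝ) / q)
    (p₁ : ℕ)
    (hfr₁ : (p₁ : ℝ) / q < Int.fract (1 / α₁))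
    (hfr₂ : Int.fract (1 / α₁) < ((p₁ : ℝ) + 1) / q) :
    ∀ N : ℕ, 1 ≤ N →
      (p₁ < p % q →
        (fracBeattyRsum α₁ α₂ (q * N - 1) : ℤ) = (p : ℤ) * N - ⌈(p : ℚ) / q⌉) ∧
      (p % q ≤ p₁ →
        (fracBeattyRsum α₁ α₂ (q * N - 1) : ℤ) = (p : ℤ) * N - ⌊(p : ℚ) / q⌋) := by
  intro N hN
  have hq' : (0 : ℝ) < q := by exact_mod_cast hq
  have hθ₂ : 1 / α₂ = p / q - 1 / α₁ := by linarith
  have hR : (fracBeattyRsum α₁ α₂ (q * N - 1) : ℤ) = p * N - 1 - (⌊1 / α₁⌋ + ⌊1 / α₂⌋) := by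
    have hqN : ((q * N - 1 : ℕ) : ℝ) + 1 = q * N := by
      rw [Nat.cast_pred (Nat.mul_pos hq hN)]
      push_cast
      ring
    have hirr : Irrational (q * N / α₁) := by
      simpa [div_eq_mul_inv] using hi1.inv.natCast_mul (Nat.mul_pos hq hN).ne'
    have hcompl : (q : ℝ) * N / α₂ = ((p * N : ℤ) : ℝ) - q * N / α₁ := by
      rw [div_eq_mul_one_div, hθ₂]
      push_cast
      field_simp
    rw [fracBeattyRsum_eq h1 h2 hi1 hi2, hqN, hcompl, hirr.floor_add_floor_intCast_sub]
  have hfloor : ⌊(p : ℝ) / q⌋ = ⌊(p : ℚ) / q⌋ := by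
    rw [← Rat.floor_cast (α := ℝ), Rat.cast_div, Rat.cast_natCast, Rat.cast_natCast]
  have hfract : Int.fract ((p : ℝ) / q) = (p % q : ℕ) / q :=
    Int.fract_div_natCast_eq_div_natCast_mod
  constructor
  · intro hlt
    have hle : Int.fract (1 / α₁) ≤ Int.fract ((p : ℝ) / q) := by
      rw [hfract]
      refine hfr₂.le.trans (div_le_div_of_nonneg_right ?_ hq'.le)
      exact_mod_cast hlt
    have hceil : ⌈(p : ℚ) / q⌉ = ⌊(p : ℚ) / q⌋ + 1 := by
      refine (Int.ceil_eq_floor_add_one_iff_notMem _).2 (Int.fract_ne_zero_iff.1 ?_)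
      rw [Int.fract_div_natCast_eq_div_natCast_mod]
      exact div_ne_zero (by exact_mod_cast (Nat.zero_lt_of_lt hlt).ne') (by exact_mod_cast hq.ne')
    rw [hR, hθ₂, Int.floor_sub_of_fract_le hle, hfloor, hceil]
    ring
  · intro hle
    have hlt : Int.fract ((p : ℝ) / q) < Int.fract (1 / α₁) := by
      rw [hfract]
      refine lt_of_le_of_lt (div_le_div_of_nonneg_right ?_ hq'.le) hfr₁
      exact_mod_cast hle
    rw [hR, hθ₂, Int.floor_sub_of_fract_lt hlt, hfloor]
    ring

theorem fractional_beatty_partial_sums (p q : ℕ) (hp : 0 < p) (hq : 0 < q)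
    (hpq : Nat.Coprime p q) (α₁ α₂ : ℝ) (h1 : 0 < α₁) (h2 : 0 < α₂)
    (hi1 : Irrational α₁) (hi2 : Irrational α₂)
    (hsum : 1 / α₁ + 1 / α₂ = (p : ℝ) / q)
    (p₁ : ℕ) (hp₁ : p₁ < q)
    (hfr₁ : (p₁ : ℝ) / q < Int.fract (1 / α₁))
    (hfr₂ : Int.fract (1 / α₁) < ((p₁ : ℝ) + 1) / q) :
    ∀ N : ℕ, 1 ≤ N →
      (p₁ < p % q →
        (fracBeattyRsum α₁ α₂ (q * N - 1) : ℤ) = (p : ℤ) * N - ⌈(p : ℚ) / q⌉) ∧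
      (p % q ≤ p₁ →
        (fracBeattyRsum α₁ α₂ (q * N - 1) : ℤ) = (p : ℤ) * N - ⌊(p : ℚ) / q⌋) :=
  fractional_beatty_partial_sums_general p q hq α₁ α₂ h1 h2 hi1 hi2 hsum p₁ hfr₁ hfr₂
end

section
/- With the notation of the fractional Beatty setup: if q > 2 and p₁ ≥ p₀, then r(N) ∈ {⌊p/q⌋ − 1, ⌊p/q⌋, ⌈p/q⌉} for every positive integer N. -/
namespace Int

section Carry

variable {R : Type*} [CommRing R] [LinearOrder R] [FloorRing R]

def carry (a b : R) : ℤ :=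
  ⌊a + b⌋ - ⌊a⌋ - ⌊b⌋

theorem cast_carry (a b : R) : (carry a b : R) = fract a + fract b - fract (a + b) := by
  simp only [carry, fract]
  push_cast
  ring

theorem floor_add_sub_floor_add_floor_add_sub_floor (u v s t : R) :
    ⌊u + s⌋ - ⌊u⌋ + (⌊v + t⌋ - ⌊v⌋) =
      ⌊s + t⌋ + carry (u + v) (s + t) + carry u v - carry (u + s) (v + t) := by
  simp only [carry]
  rw [show u + v + (s + t) = u + s + (v + t) by abel]
  ring

variable [IsStrictOrderedRing R]

theorem carry_eq_zero_or_one (a b : R) : carry a b = 0 ∨ carry a b = 1 := by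
  have h₁ : (-1 : R) < carry a b := by
    rw [cast_carry]; linarith [fract_nonneg a, fract_nonneg b, fract_lt_one (a + b)]
  have h₂ : (carry a b : R) < 2 := by
    rw [cast_carry]; linarith [fract_lt_one a, fract_lt_one b, fract_nonneg (a + b)]
  have : -1 < carry a b ∧ carry a b < 2 := ⟨by exact_mod_cast h₁, by exact_mod_cast h₂⟩
  omega

theorem fract_add_of_carry_eq_one {a b : R} (h : carry a b = 1) :
    fract (a + b) = fract a + fract b - 1 := by
  have := cast_carry a b
  rw [h, cast_one] at this
  linarith

theorem carry_eq_one_iff (a b : R) : carry a b = 1 ↔ fract (a + b) < fract a := by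
  refine ⟨fun h => ?_, fun h => ?_⟩
  · linarith [fract_add_of_carry_eq_one h, fract_lt_one b]
  · refine (carry_eq_zero_or_one a b).resolve_left fun h₀ => ?_
    have := cast_carry a b
    rw [h₀, cast_zero] at this
    linarith [fract_nonneg b]

theorem carry_add_add_eq_one {u v s t : R} (hst : fract (s + t) ≤ fract s)
    (huv : carry u v = 1) (hsum : carry (u + v) (s + t) = 1) :
    carry (u + s) (v + t) = 1 := by
  rw [carry_eq_one_iff] at huv ⊢
  rw [show u + s + (v + t) = u + v + (s + t) by abel, fract_add_of_carry_eq_one hsum]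
  linarith [fract_add_fract_le u s]

theorem floor_add_sub_floor_add_floor_add_sub_floor_mem_Icc {s t : R}
    (hst : fract (s + t) ≤ fract s) (u v : R) :
    ⌊u + s⌋ - ⌊u⌋ + (⌊v + t⌋ - ⌊v⌋) ∈ Set.Icc (⌊s + t⌋ - 1) (⌊s + t⌋ + 1) := by
  rw [floor_add_sub_floor_add_floor_add_sub_floor, Set.mem_Icc]
  have := carry_eq_zero_or_one (u + v) (s + t)
  have := carry_eq_zero_or_one u v
  have := carry_eq_zero_or_one (u + s) (v + t)
  have := carry_add_add_eq_one (u := u) (v := v) hst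
  omega

end Carry

end Int

theorem Irrational.floor_mul_eq_iff {α : ℝ} (hα : 0 < α) (hirr : Irrational α) {N : ℤ}
    (hN : N ≠ 0) (hN' : N + 1 ≠ 0) (n : ℤ) :
    ⌊n * α⌋ = N ↔ ⌊N / α⌋ < n ∧ n ≤ ⌊(N + 1) / α⌋ := by
  have hlow : (N : ℝ) / α ≠ n := (hirr.intCast_div hN).ne_int n
  have hupp : ((N : ℝ) + 1) / α ≠ n := by exact_mod_cast (hirr.intCast_div hN').ne_int n
  rw [Int.floor_eq_iff, Int.floor_lt, Int.le_floor, div_lt_iff₀ hα, le_div_iff₀ hα]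
  constructor
  · rintro ⟨h₁, h₂⟩
    refine ⟨lt_of_le_of_ne h₁ fun h => hlow ?_, h₂.le⟩
    rw [h, mul_div_cancel_right₀ _ hα.ne']
  · rintro ⟨h₁, h₂⟩
    refine ⟨h₁.le, lt_of_le_of_ne h₂ fun h => hupp ?_⟩
    rw [← h, mul_div_cancel_right₀ _ hα.ne']

theorem beattyCount_zero_eq {α : ℝ} (hα : 0 < α) (hirr : Irrational α) {N : ℤ} (hN : 0 < N) :
    (beattyCount α 0 N : ℤ) = ⌊(N + 1) / α⌋ - ⌊N / α⌋ := by
  have hlow : 0 ≤ ⌊(N : ℝ) / α⌋ := Int.floor_nonneg.2 (by positivity)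
  have hmono : ⌊(N : ℝ) / α⌋ ≤ ⌊(N + 1) / α⌋ := Int.floor_mono (by gcongr; linarith)
  have hmem : ∀ n : ℕ, (0 < n ∧ ⌊(n : ℝ) * α + 0⌋ = N) ↔
      n ∈ Finset.Ioc ⌊(N : ℝ) / α⌋.toNat ⌊(N + 1) / α⌋.toNat := by
    intro n
    have := hirr.floor_mul_eq_iff hα hN.ne' (by omega) n
    push_cast at this
    rw [add_zero, this, Finset.mem_Ioc]
    omega
  rw [beattyCount, Nat.card_congr (Equiv.subtypeEquivRight hmem), Nat.card_eq_finsetCard,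
    Nat.card_Ioc]
  omega

theorem Nat.Coprime.ceil_div_eq_floor_add_one {p q : ℕ} (hpq : p.Coprime q) (hq : 1 < q) :
    ⌈(p : ℚ) / q⌉ = ⌊(p : ℚ) / q⌋ + 1 := by
  have hmod : p % q ≠ 0 := fun h => hq.ne' (hpq.symm.eq_one_of_dvd (Nat.dvd_of_mod_eq_zero h))
  rw [Int.ceil_eq_floor_add_one_iff_notMem, ← Int.fract_ne_zero_iff,
    Int.fract_div_natCast_eq_div_natCast_mod]
  exact div_ne_zero (by exact_mod_cast hmod) (by positivity)

theorem fractional_beatty_values_case_two_general (p q : ℕ)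
    (hpq : Nat.Coprime p q) (α₁ α₂ : ℝ) (h1 : 0 < α₁) (h2 : 0 < α₂)
    (hi1 : Irrational α₁) (hi2 : Irrational α₂)
    (hsum : 1 / α₁ + 1 / α₂ = (p : ℝ) / q)
    (p₁ : ℕ)
    (hfr₁ : (p₁ : ℝ) / q < Int.fract (1 / α₁))
    (hq2 : 2 < q) (hcase : p % q ≤ p₁) :
    ∀ N : ℤ, 1 ≤ N →
      (fracBeattyR α₁ α₂ N : ℤ) = ⌊(p : ℚ) / q⌋ - 1 ∨
      (fracBeattyR α₁ α₂ N : ℤ) = ⌊(p : ℚ) / q⌋ ∨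
      (fracBeattyR α₁ α₂ N : ℤ) = ⌈(p : ℚ) / q⌉ := by
  intro N hN
  have hr : (fracBeattyR α₁ α₂ N : ℤ) = ⌊N * (1 / α₁) + 1 / α₁⌋ - ⌊N * (1 / α₁)⌋ +
      (⌊N * (1 / α₂) + 1 / α₂⌋ - ⌊N * (1 / α₂)⌋) := by
    rw [fracBeattyR, Nat.cast_add, beattyCount_zero_eq h1 hi1 hN,
      beattyCount_zero_eq h2 hi2 hN, add_div, add_div, div_eq_mul_one_div (N : ℝ) α₁,
      div_eq_mul_one_div (N : ℝ) α₂]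
  have hfloor : ⌊1 / α₁ + 1 / α₂⌋ = ⌊(p : ℚ) / q⌋ := by
    rw [hsum, ← Rat.floor_cast (α := ℝ)]
    push_cast
    rfl
  have hfract : Int.fract (1 / α₁ + 1 / α₂) ≤ Int.fract (1 / α₁) := by
    rw [hsum, Int.fract_div_natCast_eq_div_natCast_mod]
    refine le_trans (div_le_div_of_nonneg_right ?_ (Nat.cast_nonneg q)) hfr₁.le
    exact_mod_cast hcase
  have hbound := Int.floor_add_sub_floor_add_floor_add_sub_floor_mem_Icc hfract
    (N * (1 / α₁)) (N * (1 / α₂))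
  rw [Set.mem_Icc, hfloor] at hbound
  rw [hr, hpq.ceil_div_eq_floor_add_one (by omega)]
  omega

theorem fractional_beatty_values_case_two (p q : ℕ) (hp : 0 < p) (hq : 0 < q)
    (hpq : Nat.Coprime p q) (α₁ α₂ : ℝ) (h1 : 0 < α₁) (h2 : 0 < α₂)
    (hi1 : Irrational α₁) (hi2 : Irrational α₂)
    (hsum : 1 / α₁ + 1 / α₂ = (p : ℝ) / q)
    (p₁ : ℕ) (hp₁ : p₁ < q)
    (hfr₁ : (p₁ : ℝ) / q < Int.fract (1 / α₁))
    (hfr₂ : Int.fract (1 / α₁) < ((p₁ : ℝ) + 1) / q)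
    (hq2 : 2 < q) (hcase : p % q ≤ p₁) :
    ∀ N : ℤ, 1 ≤ N →
      (fracBeattyR α₁ α₂ N : ℤ) = ⌊(p : ℚ) / q⌋ - 1 ∨
      (fracBeattyR α₁ α₂ N : ℤ) = ⌊(p : ℚ) / q⌋ ∨
      (fracBeattyR α₁ α₂ N : ℤ) = ⌈(p : ℚ) / q⌉ :=
  fractional_beatty_values_case_two_general p q hpq α₁ α₂ h1 h2 hi1 hi2 hsum p₁ hfr₁ hq2 hcase
end
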